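/- Bounded differences inequality for 0-1 variables. Let X=(X_1,...,X_N) be a family of independent random variables with X_k ∈ {0,1} and p_k = P(X_k = 1). Assume the function f: {0,1}^N → ℝ satisfies the Lipschitz condition (L) with coefficients (c_k)_{k∈[N]}. Let μ = E f(X) and C = max_{k∈[N]} c_k. Then for every t ≥ 0, P(f(X) ≥ μ + t) ≤ exp(−t² / (2 Σ_{k∈[N]} (1−p_k)p_k c_k² + 2Ct/3)). -/

import Mathlib

/-!
Chernoff's method. The moment generating function of `f - 𝔼 f` at `l` is bounded by peeling off
one coordinate at a time: averaging `f` over the first coordinate gives a function of the others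
with the same Lipschitz constants, and given the others, `f` minus this average is a centred
two-point variable of span at most `c₀`, whose moment generating function is at most
`exp (l² (1 - p₀) p₀ c₀² / (2 (1 - l C / 3)))` by the Bernstein-type estimate
`exp u ≤ 1 + u + u² / (2 (1 - a / 3))` for `u ≤ a < 3`. Markov's inequality and the choice
`l = t / (V + C t / 3)`, with `V = ∑ (1 - p_k) p_k c_k²`, give the bound.
-/

open MeasureTheory ProbabilityTheory Real

theorem nonneg_of_hasDerivAt_of_nonneg {g g' : ℝ → ℝ} (hg : ∀ x, HasDerivAt g (g' x) x)
    (h0 : 0 ≤ g 0) (hg' : ∀ x, 0 ≤ x → 0 ≤ g' x) {x : ℝ} (hx : 0 ≤ x) : 0 ≤ g x :=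
  h0.trans <| monotoneOn_of_hasDerivWithinAt_nonneg (convex_Ici 0)
    (HasDerivAt.continuousOn fun x _ => hg x) (fun x _ => (hg x).hasDerivWithinAt)
    (fun x hx => hg' x (interior_subset hx)) Set.self_mem_Ici hx hx

theorem Real.exp_le_quadratic_of_nonpos {u : ℝ} (hu : u ≤ 0) : exp u ≤ 1 + u + u ^ 2 / 2 := by
  have key : ∀ v, 0 ≤ v → 0 ≤ 1 - v + v ^ 2 / 2 - exp (-v) := by
    intro v hv
    refine nonneg_of_hasDerivAt_of_nonneg (g := fun v => 1 - v + v ^ 2 / 2 - exp (-v))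
      (g' := fun v => -1 + v + exp (-v)) (fun v => ?_)
      (by simp) (fun v _ => ?_) hv
    · have := (((hasDerivAt_id' v).const_sub 1).add ((hasDerivAt_pow 2 v).div_const 2)).sub
        (hasDerivAt_neg v).exp
      exact this.congr_deriv (by ring)
    · linarith [add_one_le_exp (-v)]
  simpa using key (-u) (by linarith)

theorem Real.one_sub_div_three_mul_exp_sub_le {u : ℝ} (hu : 0 ≤ u) :
    (1 - u / 3) * (exp u - 1 - u) ≤ u ^ 2 / 2 := by
  have hH' : ∀ v, 0 ≤ v → 0 ≤ v + 2 + (v - 2) * exp v := by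
    intro v hv
    refine nonneg_of_hasDerivAt_of_nonneg (g := fun v => v + 2 + (v - 2) * exp v)
      (g' := fun v => 1 + (v - 1) * exp v) (fun v => ?_)
      (by simp) (fun v _ => ?_) hv
    · have := ((hasDerivAt_id' v).add_const 2).add (((hasDerivAt_id' v).sub_const 2).mul
        (hasDerivAt_exp v))
      exact this.congr_deriv (by ring)
    · nlinarith [add_one_le_exp (-v), exp_pos v, exp_neg v, mul_inv_cancel₀ (exp_pos v).ne']
  have hH : 0 ≤ u ^ 2 / 2 - (1 - u / 3) * (exp u - 1 - u) := by
    refine nonneg_of_hasDerivAt_of_nonneg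
      (g := fun v => v ^ 2 / 2 - (1 - v / 3) * (exp v - 1 - v))
      (g' := fun v => (v + 2 + (v - 2) * exp v) / 3)
      (fun v => ?_) (by simp) (fun v hv => by have := hH' v hv; positivity) hu
    have := ((hasDerivAt_pow 2 v).div_const 2).sub
      ((((hasDerivAt_id' v).div_const 3).const_sub 1).mul
        (((hasDerivAt_exp v).sub_const 1).sub (hasDerivAt_id' v)))
    exact this.congr_deriv (by simp only [Pi.sub_apply]; ring)
  linarith

theorem Real.exp_le_one_add_add_sq_div_of_le {a u : ℝ} (ha : 0 ≤ a) (ha3 : a < 3)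
    (hu : u ≤ a) : exp u ≤ 1 + u + u ^ 2 / (2 * (1 - a / 3)) := by
  have hpos : 0 < 1 - a / 3 := by linarith
  rcases le_or_gt u 0 with hu0 | hu0
  · calc exp u ≤ 1 + u + u ^ 2 / 2 := exp_le_quadratic_of_nonpos hu0
      _ ≤ 1 + u + u ^ 2 / (2 * (1 - a / 3)) := by
        gcongr; linarith
  · have h := one_sub_div_three_mul_exp_sub_le hu0.le
    have hle : exp u - 1 - u ≤ u ^ 2 / (2 * (1 - u / 3)) := by
      rw [le_div_iff₀ (by linarith)]; linarith
    calc exp u ≤ 1 + u + u ^ 2 / (2 * (1 - u / 3)) := by linarith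
      _ ≤ 1 + u + u ^ 2 / (2 * (1 - a / 3)) := by gcongr

theorem mgf_two_point_le {q a b c l K : ℝ} (hq0 : 0 ≤ q) (hq1 : q ≤ 1) (hab : |a - b| ≤ c)
    (hl : 0 ≤ l) (hK : 0 ≤ K) (hexp : ∀ u, u ≤ l * c → exp u ≤ 1 + u + u ^ 2 / K) :
    (1 - q) * exp (l * (a - ((1 - q) * a + q * b))) + q * exp (l * (b - ((1 - q) * a + q * b)))
      ≤ exp (l ^ 2 * ((1 - q) * q * c ^ 2) / K) := by
  obtain ⟨hba, hab'⟩ := abs_le.1 hab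
  have hfalse := hexp (l * (q * (a - b))) (by gcongr; nlinarith)
  have htrue := hexp (l * ((1 - q) * (b - a))) (by gcongr; nlinarith)
  have hsq : (a - b) ^ 2 ≤ c ^ 2 := sq_le_sq' hba hab'
  calc (1 - q) * exp (l * (a - ((1 - q) * a + q * b))) + q * exp (l * (b - ((1 - q) * a + q * b)))
      = (1 - q) * exp (l * (q * (a - b))) + q * exp (l * ((1 - q) * (b - a))) := by ring_nf
    _ ≤ (1 - q) * (1 + l * (q * (a - b)) + (l * (q * (a - b))) ^ 2 / K)
        + q * (1 + l * ((1 - q) * (b - a)) + (l * ((1 - q) * (b - a))) ^ 2 / K) := by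
      gcongr
    _ = 1 + l ^ 2 * ((1 - q) * q * (a - b) ^ 2) / K := by ring
    _ ≤ 1 + l ^ 2 * ((1 - q) * q * c ^ 2) / K := by
      have : 0 ≤ 1 - q := by linarith
      gcongr
    _ ≤ exp (l ^ 2 * ((1 - q) * q * c ^ 2) / K) := by
      linarith [add_one_le_exp (l ^ 2 * ((1 - q) * q * c ^ 2) / K)]

def HasBoundedDifferences {ι α : Type*} (f : (ι → α) → ℝ) (c : ι → ℝ) : Prop :=
  ∀ k x x', (∀ j, j ≠ k → x j = x' j) → |f x - f x'| ≤ c k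

namespace HasBoundedDifferences

variable {n : ℕ} {α : Type*} {f : (Fin (n + 1) → α) → ℝ} {c : Fin (n + 1) → ℝ}

theorem abs_sub_cons_le (hf : HasBoundedDifferences f c) (a b : α) (z : Fin n → α) :
    |f (Fin.cons a z) - f (Fin.cons b z)| ≤ c 0 :=
  hf 0 _ _ fun j hj => by
    obtain ⟨i, rfl⟩ := Fin.exists_succ_eq.2 hj
    simp

theorem convex_comb_cons (hf : HasBoundedDifferences f c) {q : ℝ} (hq0 : 0 ≤ q) (hq1 : q ≤ 1)
    (a b : α) :
    HasBoundedDifferences (fun z => (1 - q) * f (Fin.cons a z) + q * f (Fin.cons b z))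
      (fun k => c k.succ) := by
  intro k z z' hzz
  have hcons : ∀ (d : α) j, j ≠ k.succ →
      (Fin.cons d z : Fin (n + 1) → α) j = (Fin.cons d z' : Fin (n + 1) → α) j := by
    intro d j hj
    cases j using Fin.cases with
    | zero => rfl
    | succ i => exact hzz i (fun h => hj (h ▸ rfl))
  obtain ⟨ha1, ha2⟩ := abs_le.1 (hf k.succ _ _ (hcons a))
  obtain ⟨hb1, hb2⟩ := abs_le.1 (hf k.succ _ _ (hcons b))
  rw [abs_le]
  constructor <;> nlinarith

end HasBoundedDifferences

theorem integral_pi_fin_succ {n : ℕ} {E : Type*} [MeasurableSpace E]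
    (μ : Fin (n + 1) → Measure E) [∀ i, SigmaFinite (μ i)] {F : (Fin (n + 1) → E) → ℝ}
    (hF : Integrable F (Measure.pi μ)) :
    ∫ x, F x ∂Measure.pi μ =
      ∫ z, ∫ b, F (Fin.cons b z) ∂μ 0 ∂Measure.pi fun j => μ j.succ := by
  have e := (measurePreserving_piFinSuccAbove μ 0).symm
  rw [← e.integral_comp', integral_prod_symm]
  · simp [MeasurableEquiv.piFinSuccAbove_symm_apply, Fin.insertNthEquiv, Fin.insertNth_zero']
  · exact e.integrable_comp_emb (MeasurableEquiv.measurableEmbedding _) |>.2 hF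

theorem integral_bool (ν : Measure Bool) [IsProbabilityMeasure ν] (g : Bool → ℝ) :
    ∫ b, g b ∂ν = (1 - ν.real {true}) * g false + ν.real {true} * g true := by
  have hfalse : ν.real {false} = 1 - ν.real {true} := by
    rw [← probReal_compl_eq_one_sub (measurableSet_singleton _)]
    congr; ext b; simp
  rw [integral_fintype .of_finite, Fintype.sum_bool, hfalse, smul_eq_mul, smul_eq_mul, add_comm]

theorem integral_pi_bool_succ {n : ℕ} (P : Fin (n + 1) → Measure Bool)
    [∀ k, IsProbabilityMeasure (P k)] (F : (Fin (n + 1) → Bool) → ℝ) :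
    ∫ x, F x ∂Measure.pi P = ∫ z, ((1 - (P 0).real {true}) * F (Fin.cons false z)
      + (P 0).real {true} * F (Fin.cons true z)) ∂Measure.pi fun j => P j.succ := by
  simp_rw [integral_pi_fin_succ P .of_finite, integral_bool]

theorem integral_exp_sub_integral_le {N : ℕ} (P : Fin N → Measure Bool)
    [∀ k, IsProbabilityMeasure (P k)] {f : (Fin N → Bool) → ℝ} {c : Fin N → ℝ}
    (hf : HasBoundedDifferences f c) {l K : ℝ} (hl : 0 ≤ l) (hK : 0 ≤ K)
    (hexp : ∀ k u, u ≤ l * c k → exp u ≤ 1 + u + u ^ 2 / K) :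
    ∫ x, exp (l * (f x - ∫ y, f y ∂Measure.pi P)) ∂Measure.pi P ≤
      exp (l ^ 2 * (∑ k, (1 - (P k).real {true}) * (P k).real {true} * c k ^ 2) / K) := by
  induction N with
  | zero => simp [integral_unique]
  | succ N ih =>
    set q := (P 0).real {true} with hq
    have hq0 : 0 ≤ q := measureReal_nonneg
    have hq1 : q ≤ 1 := measureReal_le_one
    set m := ∫ y, f y ∂Measure.pi P
    set g : (Fin N → Bool) → ℝ := fun z =>
      (1 - q) * f (Fin.cons false z) + q * f (Fin.cons true z)
    set B := exp (l ^ 2 * ((1 - q) * q * c 0 ^ 2) / K)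
    have hm : m = ∫ z, g z ∂Measure.pi fun j => P j.succ := integral_pi_bool_succ P f
    have htwo_point : ∀ z, (1 - q) * exp (l * (f (Fin.cons false z) - g z))
        + q * exp (l * (f (Fin.cons true z) - g z)) ≤ B := fun z =>
      mgf_two_point_le hq0 hq1 (hf.abs_sub_cons_le false true z) hl hK (hexp 0)
    have hrest := ih (fun j => P j.succ) (hf.convex_comb_cons hq0 hq1 false true)
      (fun k => hexp k.succ)
    rw [← hm] at hrest
    calc ∫ x, exp (l * (f x - m)) ∂Measure.pi P
        = ∫ z, ((1 - q) * exp (l * (f (Fin.cons false z) - g z))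
            + q * exp (l * (f (Fin.cons true z) - g z))) * exp (l * (g z - m))
            ∂Measure.pi fun j => P j.succ := by
          rw [integral_pi_bool_succ, ← hq]
          congr 1 with z
          have hsplit : ∀ v, exp (l * (v - m)) = exp (l * (v - g z)) * exp (l * (g z - m)) :=
            fun v => by rw [← exp_add]; ring_nf
          rw [hsplit (f (Fin.cons false z)), hsplit (f (Fin.cons true z))]
          ring
      _ ≤ ∫ z, B * exp (l * (g z - m)) ∂Measure.pi fun j => P j.succ :=
          integral_mono .of_finite .of_finite fun z =>
            mul_le_mul_of_nonneg_right (htwo_point z) (exp_pos _).le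
      _ ≤ B * exp (l ^ 2 * (∑ k : Fin N, (1 - (P k.succ).real {true}) * (P k.succ).real {true}
            * c k.succ ^ 2) / K) := by
          rw [integral_const_mul]
          exact mul_le_mul_of_nonneg_left hrest (exp_pos _).le
      _ = _ := by
          rw [← exp_add, Fin.sum_univ_succ, ← hq]
          ring_nf

theorem measure_pi_ge_integral_add_le {N : ℕ} (P : Fin N → Measure Bool)
    [∀ k, IsProbabilityMeasure (P k)] {f : (Fin N → Bool) → ℝ} {c : Fin N → ℝ}
    (hf : HasBoundedDifferences f c) {l K : ℝ} (hl : 0 ≤ l) (hK : 0 ≤ K)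
    (hexp : ∀ k u, u ≤ l * c k → exp u ≤ 1 + u + u ^ 2 / K) (t : ℝ) :
    Measure.pi P {x | f x ≥ (∫ y, f y ∂Measure.pi P) + t} ≤ ENNReal.ofReal (exp (-(l * t)
      + l ^ 2 * (∑ k, (1 - (P k).real {true}) * (P k).real {true} * c k ^ 2) / K)) := by
  set m := ∫ y, f y ∂Measure.pi P
  have hset : {x | f x ≥ m + t} = {x | t ≤ f x - m} :=
    Set.ext fun x => show m + t ≤ f x ↔ t ≤ f x - m from le_sub_iff_add_le'.symm
  rw [hset, ← ofReal_measureReal, exp_add]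
  gcongr
  calc (Measure.pi P).real {x | t ≤ f x - m}
      ≤ exp (-l * t) * mgf (fun x => f x - m) (Measure.pi P) l :=
        measure_ge_le_exp_mul_mgf t hl .of_finite
    _ ≤ _ := by
      rw [neg_mul]
      gcongr
      exact integral_exp_sub_integral_le P hf hl hK hexp

theorem exists_bernstein_exponent_le {V C t : ℝ} (hV : 0 ≤ V) (hC : 0 ≤ C) (ht : 0 ≤ t)
    (hd : 0 < 2 * V + 2 * C * t / 3) :
    ∃ l, 0 ≤ l ∧ l * C < 3 ∧
      -(l * t) + l ^ 2 * V / (2 * (1 - l * C / 3)) ≤ -t ^ 2 / (2 * V + 2 * C * t / 3) := by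
  rcases hV.eq_or_lt with rfl | hV
  -- the optimal `l = t / (V + C * t / 3)` would reach `l * C = 3`, where the bound degenerates
  · have hCt : 0 < C * t := by linarith
    have hC : 0 < C := pos_of_mul_pos_left hCt ht
    refine ⟨3 / (2 * C), by positivity, by field_simp; norm_num, le_of_eq ?_⟩
    field_simp
    ring
  · set s := V + C * t / 3 with hs_def
    have hs : 0 < s := by positivity
    refine ⟨t / s, by positivity, ?_, le_of_eq ?_⟩
    · rw [div_mul_eq_mul_div, div_lt_iff₀ hs]
      linarith
    · have h1 : 1 - t / s * C / 3 = V / s := by field_simp; ring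
      rw [h1, show 2 * V + 2 * C * t / 3 = 2 * s by ring]
      field_simp
      ring

/-- **Bounded differences inequality for 0-1 variables** (Corollary 1.4 of Warnke).
The coordinates are independent `Bool`-valued random variables (`true` := 1), modeled by
the product measure `Measure.pi P`, with `p k = P(X_k = 1)`. -/
theorem bounded_differences_bool {N : ℕ}
    (P : Fin N → Measure Bool) [∀ k, IsProbabilityMeasure (P k)]
    (p : Fin N → ℝ) (hp : ∀ k, p k = (P k {true}).toReal)
    (f : (Fin N → Bool) → ℝ)
    (c : Fin N → ℝ)
    -- the Lipschitz condition (L)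
    (hL : ∀ (k : Fin N) (x x' : Fin N → Bool), (∀ j, j ≠ k → x j = x' j) →
      |f x - f x'| ≤ c k)
    -- `C = max_k c_k`
    (C : ℝ) (hC : IsGreatest (Set.range c) C)
    (t : ℝ) (ht : 0 ≤ t) :
    Measure.pi P {x | f x ≥ (∫ y, f y ∂(Measure.pi P)) + t} ≤
      ENNReal.ofReal (Real.exp (-t ^ 2 /
        (2 * ∑ k, (1 - p k) * p k * c k ^ 2 + 2 * C * t / 3))) := by
  obtain rfl : p = fun k => (P k).real {true} := funext hp
  obtain ⟨⟨k₀, rfl⟩, hcC⟩ := hC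
  have hc : ∀ k, 0 ≤ c k := fun k => by simpa using hL k 0 0 fun _ _ => rfl
  set V := ∑ k, (1 - (P k).real {true}) * (P k).real {true} * c k ^ 2
  have hV : 0 ≤ V := Finset.sum_nonneg fun k _ => by
    have : (P k).real {true} ≤ 1 := measureReal_le_one
    have : 0 ≤ 1 - (P k).real {true} := by linarith
    positivity
  rcases (by nlinarith [hc k₀] : 0 ≤ 2 * V + 2 * c k₀ * t / 3).eq_or_lt with hd | hd
  -- a zero denominator makes the right-hand side `ofReal (exp 0) = 1`
  · rw [← hd, div_zero, exp_zero, ENNReal.ofReal_one]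
    exact prob_le_one
  obtain ⟨l, hl, hlC, hbound⟩ := exists_bernstein_exponent_le hV (hc k₀) ht hd
  have hexp : ∀ k u, u ≤ l * c k → exp u ≤ 1 + u + u ^ 2 / (2 * (1 - l * c k₀ / 3)) :=
    fun k u hu => exp_le_one_add_add_sq_div_of_le (mul_nonneg hl (hc k₀)) hlC
      (hu.trans (mul_le_mul_of_nonneg_left (hcC ⟨k, rfl⟩) hl))
  calc _ ≤ _ := measure_pi_ge_integral_add_le P hL hl (by linarith) hexp t
    _ ≤ _ := ENNReal.ofReal_le_ofReal (exp_le_exp.2 hbound)
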